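/- arXiv:2003.05299 — 3 statements merged into one kernel-verified Lean document; each statement's English description precedes it below -/
import Mathlib

section
/- Let n ≥ 2 and let Γ = (Γ₁, …, Γₙ) be a vector of positive real numbers, and fix an index k. Then every positive element of the set {Σ_{i≠k} mᵢΓᵢ : m ∈ ℤⁿ⁻¹} is ≥ Γ_k if and only if the numbers {Γᵢ}_{i≠k} are commensurable and Γ_k ≤ κ(Γ₁, …, Γ_{k−1}, Γ_{k+1}, …, Γₙ). -/
/-- Bézout's lemma for a `Finset`-indexed gcd of natural numbers, with integer
coefficients. -/
lemma finset_gcd_bezout {ι : Type*} [DecidableEq ι] (s : Finset ι) (l : ι → ℕ) :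
    ∃ m : ι → ℤ, ∑ i ∈ s, m i * (l i : ℤ) = ((s.gcd l : ℕ) : ℤ) := by
  classical
  induction s using Finset.induction_on with
  | empty => exact ⟨0, by simp⟩
  | @insert a s ha ih =>
    obtain ⟨m, hm⟩ := ih
    set g := s.gcd l with hg
    refine ⟨Function.update (fun i => Nat.gcdB (l a) g * m i) a (Nat.gcdA (l a) g), ?_⟩
    rw [Finset.gcd_insert, Finset.sum_insert ha]
    have h1 : ∀ i ∈ s, Function.update (fun i => Nat.gcdB (l a) g * m i) a
        (Nat.gcdA (l a) g) i * (l i : ℤ) = Nat.gcdB (l a) g * (m i * (l i : ℤ)) := by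
      intro i hi
      rw [Function.update_of_ne (by rintro rfl; exact ha hi), mul_assoc]
    rw [Finset.sum_congr rfl h1, ← Finset.mul_sum, hm, Function.update_self,
      gcd_eq_nat_gcd]
    have := Nat.gcd_eq_gcd_ab (l a) g
    push_cast at this ⊢
    linarith [this]

/-- For positive vorticities `Γ` and a fixed index `k`, every positive
integer linear combination of the `Γ i`, `i ≠ k`, is `≥ Γ k` if and only if the
`Γ i`, `i ≠ k`, are commensurable (i.e. `Γ i = β * l i` for some `β > 0` and positive
integers `l i`) and `Γ k ≤ κ = β * gcd {l i}_{i ≠ k}`. -/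
theorem stmt4 (n : ℕ) (hn : 2 ≤ n) (Γ : Fin n → ℝ) (hΓ : ∀ i, 0 < Γ i) (k : Fin n) :
    (∀ m : Fin n → ℤ,
        0 < ∑ i ∈ Finset.univ.erase k, (m i : ℝ) * Γ i →
        Γ k ≤ ∑ i ∈ Finset.univ.erase k, (m i : ℝ) * Γ i)
      ↔ ∃ β : ℝ, 0 < β ∧ ∃ l : Fin n → ℕ,
          (∀ i ∈ Finset.univ.erase k, 0 < l i ∧ Γ i = β * l i) ∧
          Γ k ≤ β * (((Finset.univ.erase k).gcd l : ℕ) : ℝ) := by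
  classical
  set S := Finset.univ.erase k with hSdef
  have hSne : S.Nonempty := by
    have h1 : 1 ≤ S.card := by
      rw [hSdef, Finset.card_erase_of_mem (Finset.mem_univ k), Finset.card_univ,
        Fintype.card_fin]
      omega
    exact Finset.card_pos.mp h1
  constructor
  · intro H
    -- the additive subgroup of all integer combinations
    set G : AddSubgroup ℝ :=
      { carrier := {x | ∃ m : Fin n → ℤ, x = ∑ i ∈ S, (m i : ℝ) * Γ i}
        zero_mem' := ⟨0, by simp⟩
        add_mem' := by
          rintro x y ⟨m, rfl⟩ ⟨m', rfl⟩
          exact ⟨m + m', by simp [add_mul, Finset.sum_add_distrib]⟩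
        neg_mem' := by
          rintro x ⟨m, rfl⟩
          exact ⟨-m, by simp [← Finset.sum_neg_distrib]⟩ } with hGdef
    have hGmem : ∀ x ∈ G, 0 < x → Γ k ≤ x := by
      rintro x ⟨m, rfl⟩ hx
      exact H m hx
    have hΓmem : ∀ i ∈ S, Γ i ∈ G := by
      intro i hi
      refine ⟨fun j => if j = i then 1 else 0, ?_⟩
      rw [Finset.sum_eq_single i]
      · simp
      · intro b hb hbi; simp [hbi]
      · intro hi'; exact absurd hi hi'
    -- G is not dense
    have hnotdense : ¬ Dense (G : Set ℝ) := by
      intro hd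
      obtain ⟨x, hxG, hx⟩ := hd.exists_mem_open
        (isOpen_Ioo : IsOpen (Set.Ioo (0 : ℝ) (Γ k)))
        ⟨Γ k / 2, by have := hΓ k; constructor <;> linarith⟩
      exact absurd (hGmem x hxG hx.1) (not_le.mpr hx.2)
    obtain ⟨a, ha⟩ := (AddSubgroup.dense_or_cyclic G).resolve_left hnotdense
    set β := |a| with hβ
    have hGβ : ∀ x ∈ G, ∃ z : ℤ, x = z * β := by
      intro x hx
      rw [ha, AddSubgroup.mem_closure_singleton] at hx
      obtain ⟨z, hz⟩ := hx
      rcases abs_cases a with ⟨h1, _⟩ | ⟨h1, _⟩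
      · exact ⟨z, by rw [← hz, hβ, h1, zsmul_eq_mul, mul_comm]⟩
      · exact ⟨-z, by rw [← hz, hβ, h1, zsmul_eq_mul]; push_cast; ring⟩
    obtain ⟨i0, hi0⟩ := hSne
    have hβpos : 0 < β := by
      obtain ⟨z, hz⟩ := hGβ (Γ i0) (hΓmem i0 hi0)
      rcases (abs_nonneg a).lt_or_eq with h | h
      · exact h
      · exfalso; rw [hβ, ← h, mul_zero] at hz; exact (hΓ i0).ne' hz
    -- choose coefficients
    have hch : ∀ i : Fin n, ∃ z : ℤ, i ∈ S → Γ i = z * β := by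
      intro i
      by_cases hi : i ∈ S
      · obtain ⟨z, hz⟩ := hGβ (Γ i) (hΓmem i hi)
        exact ⟨z, fun _ => hz⟩
      · exact ⟨0, fun h => absurd h hi⟩
    choose z hz using hch
    have hzpos : ∀ i ∈ S, 0 < z i := by
      intro i hi
      have := hz i hi
      by_contra h
      push_neg at h
      have : Γ i ≤ 0 := by
        rw [this]
        have : (z i : ℝ) ≤ 0 := by exact_mod_cast h
        nlinarith
      exact absurd this (not_le.mpr (hΓ i))
    set l : Fin n → ℕ := fun i => (z i).toNat with hl
    have hlspec : ∀ i ∈ S, 0 < l i ∧ Γ i = β * l i := by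
      intro i hi
      have h1 := hzpos i hi
      constructor
      · simpa [hl] using h1
      · rw [hz i hi, hl]
        have : ((z i).toNat : ℝ) = (z i : ℝ) := by
          exact_mod_cast Int.toNat_of_nonneg h1.le
        rw [this, mul_comm]
    refine ⟨β, hβpos, l, hlspec, ?_⟩
    -- gcd is positive and β * gcd is in G
    set d := S.gcd l with hd
    have hdpos : 0 < d := by
      rcases Nat.eq_zero_or_pos d with h | h
      · exfalso
        have := (Finset.gcd_eq_zero_iff).mp h i0 hi0
        exact absurd this (hlspec i0 hi0).1.ne'
      · exact h
    obtain ⟨m, hm⟩ := finset_gcd_bezout S l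
    have hsum : ∑ i ∈ S, (m i : ℝ) * Γ i = β * d := by
      have : ∀ i ∈ S, (m i : ℝ) * Γ i = β * ((m i * (l i : ℤ) : ℤ) : ℝ) := by
        intro i hi
        rw [(hlspec i hi).2]
        push_cast
        ring
      rw [Finset.sum_congr rfl this, ← Finset.mul_sum]
      congr 1
      rw [hd]
      exact_mod_cast hm
    have hpos : 0 < ∑ i ∈ S, (m i : ℝ) * Γ i := by
      rw [hsum]
      have : (0 : ℝ) < d := by exact_mod_cast hdpos
      positivity
    have := H m hpos
    rwa [hsum] at this
  · rintro ⟨β, hβ, l, hlspec, hκ⟩ m hpos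
    set d := S.gcd l with hd
    have hdpos : 0 < d := by
      obtain ⟨i0, hi0⟩ := hSne
      rcases Nat.eq_zero_or_pos d with h | h
      · exact absurd ((Finset.gcd_eq_zero_iff).mp h i0 hi0) (hlspec i0 hi0).1.ne'
      · exact h
    set T : ℤ := ∑ i ∈ S, m i * (l i : ℤ) with hT
    have hsum : ∑ i ∈ S, (m i : ℝ) * Γ i = β * (T : ℝ) := by
      have : ∀ i ∈ S, (m i : ℝ) * Γ i = β * ((m i * (l i : ℤ) : ℤ) : ℝ) := by
        intro i hi
        rw [(hlspec i hi).2]; push_cast; ring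
      rw [Finset.sum_congr rfl this, ← Finset.mul_sum, hT]
      push_cast
      rfl
    have hTpos : 0 < T := by
      rw [hsum] at hpos
      by_contra h
      push_neg at h
      have hT0 : (T : ℝ) ≤ 0 := by exact_mod_cast h
      nlinarith
    have hdvd : (d : ℤ) ∣ T := by
      apply Finset.dvd_sum
      intro i hi
      exact Dvd.dvd.mul_left (Int.natCast_dvd_natCast.mpr (Finset.gcd_dvd hi)) _
    have hdT : (d : ℤ) ≤ T := Int.le_of_dvd hTpos hdvd
    have : β * (d : ℝ) ≤ β * (T : ℝ) := by
      apply mul_le_mul_of_nonneg_left _ hβ.le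
      exact_mod_cast hdT
    rw [hsum]
    exact hκ.trans this
end

section
/- For every n ≥ 3, the set 𝒬ₙ of vectors Γ ∈ (0, ∞)ⁿ that possess a thin vorticity — i.e., for which there exists an index k such that the numbers {Γᵢ}_{i≠k} are commensurable and Γ_k ≤ κ(Γ₁, …, Γ_{k−1}, Γ_{k+1}, …, Γₙ) — has n-dimensional Lebesgue measure zero. -/
/-! Each thin configuration has two distinct coordinates `Γ i = β lᵢ`, `Γ j = β lⱼ` with
rational ratio `lᵢ / lⱼ` (this is where `n ≥ 3` enters: at least two indices differ from `k`).
Hence `𝒬ₙ` lies in the countable union of the hyperplanes `Γ i = q Γ j`, `i ≠ j`, `q ∈ ℚ`,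
each of which is Lebesgue-null. -/

open MeasureTheory

section RationalRatio

variable {ι : Type*} [Fintype ι] (μ : Measure (ι → ℝ)) [μ.IsAddHaarMeasure]

theorem addHaar_setOf_apply_eq_mul_apply {i j : ι} (hij : i ≠ j) (c : ℝ) :
    μ {x | x i = c * x j} = 0 := by
  classical
  let f : (ι → ℝ) →ₗ[ℝ] ℝ := LinearMap.proj i - c • LinearMap.proj j
  have hker : {x : ι → ℝ | x i = c * x j} = LinearMap.ker f := by
    ext x
    simp only [Set.mem_ofPred_eq, SetLike.mem_coe, LinearMap.mem_ker, f, LinearMap.sub_apply,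
      LinearMap.smul_apply, LinearMap.proj_apply, smul_eq_mul, sub_eq_zero]
  rw [hker]
  refine Measure.addHaar_submodule μ _ fun htop => ?_
  have hfi : f (Pi.single i 1) = 0 := LinearMap.ker_eq_top.mp htop ▸ rfl
  simp [f, hij.symm] at hfi

theorem addHaar_setOf_exists_rat_ratio :
    μ {x | ∃ i j, i ≠ j ∧ ∃ q : ℚ, x i = q * x j} = 0 := by
  have hunion : {x : ι → ℝ | ∃ i j, i ≠ j ∧ ∃ q : ℚ, x i = q * x j} =
      ⋃ (i) (j) (_ : i ≠ j) (q : ℚ), {x | x i = (q : ℝ) * x j} := by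
    ext x
    simp only [Set.mem_ofPred_eq, Set.mem_iUnion, exists_prop]
  rw [hunion]
  exact measure_iUnion_null fun i => measure_iUnion_null fun j =>
    measure_iUnion_null fun hij => measure_iUnion_null fun q =>
      addHaar_setOf_apply_eq_mul_apply μ hij q

end RationalRatio

/-- For `n ≥ 3`, the set `𝒬ₙ` of positive vorticity vectors possessing a
thin vorticity (an index `k` such that the `Γ i`, `i ≠ k`, are commensurable, i.e.
`Γ i = β * l i` with `β > 0`, `l i ∈ ℕ₊`, and `Γ k ≤ κ = β * gcd {l i}_{i ≠ k}`) has
`n`-dimensional Lebesgue measure zero. -/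
theorem stmt7 (n : ℕ) (hn : 3 ≤ n) :
    MeasureTheory.volume
      {Γ : Fin n → ℝ | (∀ i, 0 < Γ i) ∧
        ∃ k : Fin n, ∃ β : ℝ, 0 < β ∧ ∃ l : Fin n → ℕ,
          (∀ i ∈ Finset.univ.erase k, 0 < l i ∧ Γ i = β * l i) ∧
          Γ k ≤ β * (((Finset.univ.erase k).gcd l : ℕ) : ℝ)} = 0 := by
  refine measure_mono_null ?_ (addHaar_setOf_exists_rat_ratio (volume : Measure (Fin n → ℝ)))
  rintro Γ ⟨-, k, β, -, l, hl, -⟩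
  have hcard : 1 < (Finset.univ.erase k).card := by
    rw [Finset.card_erase_of_mem (Finset.mem_univ k), Finset.card_univ, Fintype.card_fin]
    omega
  obtain ⟨i, hi, j, hj, hij⟩ := Finset.one_lt_card.mp hcard
  obtain ⟨-, hΓi⟩ := hl i hi
  obtain ⟨hlj, hΓj⟩ := hl j hj
  refine ⟨i, j, hij, (l i : ℚ) / l j, ?_⟩
  have hlj' : (l j : ℝ) ≠ 0 := by positivity
  rw [hΓi, hΓj]
  push_cast
  field_simp
end

section
/- Let Γ₁, …, Γₙ be nonzero real numbers and let s₁, …, sₙ be pairwise distinct unit vectors in ℝ³ forming a fixed point of the n-vortex problem on the round unit sphere, i.e. satisfying Σ_{j≠i} Γⱼ (sⱼ × sᵢ)/‖sᵢ − sⱼ‖² = 0 for every index i. Then Σ_{1≤i<j≤n} ΓᵢΓⱼ (sᵢ + sⱼ) = 0 in ℝ³. -/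
/-!
Crossing the `i`-th fixed-point equation with `s i` and using, for unit vectors,
`u × (v × u) = v - ⟪u, v⟫ u = (v - u) + (‖u - v‖² / 2) u`, turns it into
`∑_{j ≠ i} (2 Γ j / ‖s i - s j‖²) (s j - s i) + Γ j s i = 0`.
Multiplying by `Γ i` and summing over `i`, the first part cancels by antisymmetry in `(i, j)`,
leaving `∑_{i ≠ j} Γ i Γ j s i = 0`, which is the sum over pairs rearranged.
-/

open Finset
open scoped RealInnerProductSpace

/-- The cross product on `ℝ³` viewed as the Euclidean space `EuclideanSpace ℝ (Fin 3)`. -/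
noncomputable def cross (u v : EuclideanSpace ℝ (Fin 3)) : EuclideanSpace ℝ (Fin 3) :=
  (WithLp.equiv 2 (Fin 3 → ℝ)).symm
    (crossProduct ((WithLp.equiv 2 (Fin 3 → ℝ)) u) ((WithLp.equiv 2 (Fin 3 → ℝ)) v))

lemma Finset.sum_sum_erase_eq_zero_of_antisymm {ι M : Type*} [Fintype ι] [DecidableEq ι]
    [AddCommGroup M] (f : ι → ι → M) (hf : ∀ i j, f j i = -f i j) :
    ∑ i, ∑ j ∈ univ.erase i, f i j = 0 := by
  rw [← sum_finset_product' univ.offDiag univ (fun i => univ.erase i)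
    (fun p => by simpa using ne_comm)]
  refine sum_involution (fun p _ => p.swap)
    (fun p _ => by rw [Prod.fst_swap, Prod.snd_swap, hf, neg_add_cancel]) (fun p hp _ => ?_)
    (fun p hp => by simpa [eq_comm] using hp) (fun p _ => p.swap_swap)
  simpa [Prod.swap, Prod.ext_iff, eq_comm] using hp

lemma Finset.sum_sum_lt_add_swap {ι M : Type*} [Fintype ι] [LinearOrder ι] [AddCommMonoid M]
    (w : ι → ι → M) :
    ∑ i, ∑ j ∈ univ.filter (fun j => i < j), (w i j + w j i) =
      ∑ i, ∑ j ∈ univ.erase i, w i j := by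
  have hswap : ∑ i, ∑ j ∈ univ.filter (fun j => i < j), w j i
      = ∑ i, ∑ j ∈ univ.filter (fun j => j < i), w i j := by
    simp only [sum_filter]
    exact sum_comm
  have hsplit : ∀ i : ι,
      univ.erase i = univ.filter (fun j => i < j) ∪ univ.filter (fun j => j < i) := by
    intro i; ext j; simp [ne_comm, lt_or_lt_iff_ne]
  simp only [sum_add_distrib, hswap, hsplit]
  rw [← sum_add_distrib]
  refine sum_congr rfl fun i _ => (sum_union (s₁ := univ.filter (fun j => i < j)) ?_).symm
  exact disjoint_filter.2 fun j _ h h' => lt_asymm h h'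

lemma cross_sum_smul_right {ι : Type*} (u : EuclideanSpace ℝ (Fin 3)) (t : Finset ι)
    (c : ι → ℝ) (v : ι → EuclideanSpace ℝ (Fin 3)) :
    cross u (∑ j ∈ t, c j • v j) = ∑ j ∈ t, c j • cross u (v j) := by
  simp [cross, map_sum, map_smul]

lemma cross_cross_self (u v : EuclideanSpace ℝ (Fin 3)) :
    cross u (cross v u) = ⟪u, u⟫ • v - ⟪u, v⟫ • u := by
  have := cross_cross_eq_smul_sub_smul'
    (WithLp.equiv 2 _ u) (WithLp.equiv 2 _ v) (WithLp.equiv 2 _ u)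
  simp only [cross, Equiv.apply_symm_apply, this]
  rw [EuclideanSpace.inner_eq_star_dotProduct, EuclideanSpace.inner_eq_star_dotProduct]
  ext i
  simp [dotProduct_comm]

lemma norm_sub_sq_of_norm_eq_one {E : Type*} [NormedAddCommGroup E] [InnerProductSpace ℝ E]
    {u v : E} (hu : ‖u‖ = 1) (hv : ‖v‖ = 1) : ‖u - v‖ ^ 2 = 2 * (1 - ⟪u, v⟫) := by
  rw [norm_sub_sq_real, hu, hv]; ring

lemma cross_cross_self_of_norm_eq_one {u v : EuclideanSpace ℝ (Fin 3)}
    (hu : ‖u‖ = 1) (hv : ‖v‖ = 1) :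
    cross u (cross v u) = (v - u) + (‖u - v‖ ^ 2 / 2) • u := by
  rw [cross_cross_self, real_inner_self_eq_norm_sq, hu, norm_sub_sq_of_norm_eq_one hu hv]
  module

lemma sum_smul_sub_add_smul_eq_zero_of_sum_smul_cross_eq_zero {ι : Type*} {t : Finset ι}
    {c : ι → ℝ} {u : EuclideanSpace ℝ (Fin 3)} {v : ι → EuclideanSpace ℝ (Fin 3)}
    (hu : ‖u‖ = 1) (hv : ∀ j ∈ t, ‖v j‖ = 1) (hne : ∀ j ∈ t, v j ≠ u)
    (h : ∑ j ∈ t, (c j / ‖u - v j‖ ^ 2) • cross (v j) u = 0) :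
    ∑ j ∈ t, ((2 * c j / ‖u - v j‖ ^ 2) • (v j - u) + c j • u) = 0 := by
  calc ∑ j ∈ t, ((2 * c j / ‖u - v j‖ ^ 2) • (v j - u) + c j • u)
      = (2 : ℝ) • cross u (∑ j ∈ t, (c j / ‖u - v j‖ ^ 2) • cross (v j) u) := by
        rw [cross_sum_smul_right, smul_sum]
        refine sum_congr rfl fun j hj => ?_
        have hd : ‖u - v j‖ ≠ 0 := norm_ne_zero_iff.2 (sub_ne_zero.2 (hne j hj).symm)
        rw [cross_cross_self_of_norm_eq_one hu (hv j hj)]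
        match_scalars <;> field_simp
    _ = 0 := by rw [h]; simp [cross]

theorem stmt11_general (n : ℕ) (Γ : Fin n → ℝ)
    (s : Fin n → EuclideanSpace ℝ (Fin 3)) (hs : ∀ i, ‖s i‖ = 1)
    (hdist : ∀ i j, i ≠ j → s i ≠ s j)
    (hfix : ∀ i, ∑ j ∈ Finset.univ.erase i,
        (Γ j / ‖s i - s j‖ ^ 2) • cross (s j) (s i) = 0) :
    ∑ i, ∑ j ∈ Finset.univ.filter (fun j => i < j), (Γ i * Γ j) • (s i + s j) = 0 := by
  have hmoment : ∀ i, ∑ j ∈ univ.erase i,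
      ((2 * Γ j / ‖s i - s j‖ ^ 2) • (s j - s i) + Γ j • s i) = 0 := fun i =>
    sum_smul_sub_add_smul_eq_zero_of_sum_smul_cross_eq_zero (hs i) (fun j _ => hs j)
      (fun j hj => hdist j i (ne_of_mem_erase hj)) (hfix i)
  have hdrift : ∑ i, ∑ j ∈ univ.erase i,
      Γ i • (2 * Γ j / ‖s i - s j‖ ^ 2) • (s j - s i) = 0 :=
    sum_sum_erase_eq_zero_of_antisymm _ fun i j => by
      rw [norm_sub_rev, smul_smul, smul_smul, ← neg_sub (s j), smul_neg]
      ring_nf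
  have hpairs : ∑ i, ∑ j ∈ univ.erase i, (Γ i * Γ j) • s i = 0 := by
    have hsum : ∑ i, Γ i • ∑ j ∈ univ.erase i,
        ((2 * Γ j / ‖s i - s j‖ ^ 2) • (s j - s i) + Γ j • s i) = 0 :=
      sum_eq_zero fun i _ => by rw [hmoment i, smul_zero]
    simp only [smul_sum, smul_add, sum_add_distrib] at hsum
    rw [hdrift, zero_add] at hsum
    simpa only [smul_smul] using hsum
  calc ∑ i, ∑ j ∈ univ.filter (fun j => i < j), (Γ i * Γ j) • (s i + s j)
      = ∑ i, ∑ j ∈ univ.filter (fun j => i < j),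
          ((Γ i * Γ j) • s i + (Γ j * Γ i) • s j) := by
        simp only [smul_add, mul_comm]
    _ = 0 := by rw [sum_sum_lt_add_swap, hpairs]

/-- If pairwise distinct unit vectors `s i ∈ ℝ³` with nonzero vorticities
`Γ i` form a fixed point of the n-vortex problem on the round unit sphere, i.e.
`∑_{j ≠ i} Γ j (s j × s i)/‖s i − s j‖² = 0` for all `i`, then
`∑_{i<j} Γ i Γ j (s i + s j) = 0`. -/
theorem stmt11 (n : ℕ) (Γ : Fin n → ℝ) (hΓ : ∀ i, Γ i ≠ 0)
    (s : Fin n → EuclideanSpace ℝ (Fin 3)) (hs : ∀ i, ‖s i‖ = 1)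
    (hdist : ∀ i j, i ≠ j → s i ≠ s j)
    (hfix : ∀ i, ∑ j ∈ Finset.univ.erase i,
        (Γ j / ‖s i - s j‖ ^ 2) • cross (s j) (s i) = 0) :
    ∑ i, ∑ j ∈ Finset.univ.filter (fun j => i < j), (Γ i * Γ j) • (s i + s j) = 0 :=
  stmt11_general n Γ s hs hdist hfix
end
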